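/- arXiv:2002.10639 — 5 statements merged into one kernel-verified Lean document; each statement's English description precedes it below -/
import Mathlib

section
/- The free product of n copies of the single-edge graph T₁ (one edge on two vertices) is a tree that is regular of degree n. -/
variable {ι : Type} [DecidableEq ι]

abbrev Letter (V : ι → Type) := Σ i, V i

def upd {V : ι → Type} (u : ∀ i, V i) : List (Letter V) → ∀ i, V i
  | [] => u
  | ⟨j, x⟩ :: w => Function.update (upd u w) j x

def Adm {V : ι → Type} (u : ∀ i, V i) (w : List (Letter V)) : Prop :=
  w.Chain' (fun a b => a.1 ≠ b.1) ∧
    ∀ (a : Letter V) (p : List (Letter V)), a :: p <:+ w → a.2 ≠ upd u p a.1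

def Word {V : ι → Type} (u : ∀ i, V i) := {w : List (Letter V) // Adm u w}

def emptyWord {V : ι → Type} (u : ∀ i, V i) : Word u :=
  ⟨[], List.isChain_nil, by intro a p h; simp at h⟩

def Pre {V : ι → Type} (G : ∀ i, SimpleGraph (V i)) (u : ∀ i, V i)
    (v w : List (Letter V)) : Prop :=
  (∃ (p : List (Letter V)) (j : ι) (a b : V j),
      (G j).Adj a b ∧ v = ⟨j, a⟩ :: p ∧ w = ⟨j, b⟩ :: p) ∨
  (∃ (j : ι) (a : V j), (G j).Adj (upd u v j) a ∧ w = ⟨j, a⟩ :: v)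

def freeProd {V : ι → Type} (G : ∀ i, SimpleGraph (V i)) (u : ∀ i, V i) :
    SimpleGraph (Word u) :=
  SimpleGraph.fromRel fun v w => Pre G u v.1 w.1

/-! In a free product of copies of `T₁` the letter of index `j` at the head of an admissible word
`p` is forced: it is the vertex of `T₁` other than `upd u p j`. Hence a word is adjacent exactly to
its one-letter extensions and to its tail. Word length then changes by one along every edge and the
only shorter neighbour of a word is its tail, which rules out cycles (look at a longest word on a
cycle), while deleting letters one at a time joins every word to the empty word. The neighbours of
`v` are indexed by `j : ι`: delete the head of `v` if it has index `j`, otherwise prepend the forced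
letter of index `j`. -/

theorem SimpleGraph.isAcyclic_of_unique_lower_neighbor {W β : Type*} [LinearOrder β]
    {G : SimpleGraph W} (h : W → β) (h_ne : ∀ ⦃v w⦄, G.Adj v w → h v ≠ h w)
    (h_lower : ∀ ⦃v x y⦄, G.Adj v x → G.Adj v y → h x < h v → h y < h v → x = y) :
    G.IsAcyclic := by
  classical
  intro v c hc
  obtain ⟨m, hm, hmax⟩ :=
    Set.exists_max_image {x | x ∈ c.support} h c.support.finite_toSet ⟨v, c.start_mem_support⟩
  let c' := c.rotate m hm
  have hc' : c'.IsCycle := hc.rotate hm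
  have below : ∀ i, G.Adj m (c'.getVert i) → h (c'.getVert i) < h m := fun i hadj =>
    (hmax _ ((c.mem_support_rotate_iff _ hm).1 (c'.getVert_mem_support i))).lt_of_ne
      (h_ne hadj).symm
  have h_snd := c'.adj_snd hc'.not_nil
  have h_penultimate := (c'.adj_penultimate hc'.not_nil).symm
  exact hc'.snd_ne_penultimate (h_lower h_snd h_penultimate (below _ h_snd) (below _ h_penultimate))

namespace Adm

variable {V : ι → Type} {u : ∀ i, V i}

theorem tail {l : List (Letter V)} (h : Adm u l) : Adm u l.tail :=
  ⟨h.1.tail, fun a p hs => h.2 a p (hs.trans l.tail_suffix)⟩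

theorem head_ne {j : ι} {x : V j} {l : List (Letter V)} (h : Adm u (⟨j, x⟩ :: l)) :
    x ≠ upd u l j :=
  h.2 ⟨j, x⟩ l List.suffix_rfl

theorem cons {l : List (Letter V)} (hl : Adm u l) {j : ι} (hj : ∀ b ∈ l.head?, j ≠ b.1) {x : V j}
    (hx : x ≠ upd u l j) : Adm u (⟨j, x⟩ :: l) := by
  refine ⟨List.isChain_cons.2 ⟨hj, hl.1⟩, fun a p hs => ?_⟩
  rcases List.suffix_cons_iff.1 hs with h | h
  · obtain ⟨rfl, rfl⟩ := List.cons_eq_cons.1 h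
    exact hx
  · exact hl.2 a p h

end Adm

theorem fin_two_ne_iff_eq_rev {x c : Fin 2} : x ≠ c ↔ x = c.rev := by
  revert x c; decide

abbrev freeProdT₁ (u : ι → Fin 2) : SimpleGraph (Word u) :=
  freeProd (fun _ => ⊤) u

section FreeProdT₁

variable {u : ι → Fin 2}

theorem Adm.head_eq_rev {j : ι} {x : Fin 2} {l : List (Letter fun _ : ι => Fin 2)}
    (h : Adm u (⟨j, x⟩ :: l)) : x = (upd u l j).rev :=
  fin_two_ne_iff_eq_rev.1 h.head_ne

theorem freeProdT₁_adj_iff {v w : Word u} :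
    (freeProdT₁ u).Adj v w ↔ (∃ a, w.1 = a :: v.1) ∨ ∃ a, v.1 = a :: w.1 := by
  have pre_iff : ∀ v w : Word u, Pre (fun _ => ⊤) u v.1 w.1 ↔ ∃ a, w.1 = a :: v.1 := by
    refine fun v w => ⟨?_, fun ⟨⟨j, x⟩, hw⟩ => ?_⟩
    · rintro (⟨p, j, a, b, hab, hv, hw⟩ | ⟨j, a, -, hw⟩)
      · exact absurd (((hv ▸ v.2).head_eq_rev).trans (hw ▸ w.2).head_eq_rev.symm) hab
      · exact ⟨⟨j, a⟩, hw⟩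
    · exact .inr ⟨j, x, (SimpleGraph.top_adj _ _).2 (hw ▸ w.2).head_ne.symm, hw⟩
  rw [freeProdT₁, freeProd, SimpleGraph.fromRel_adj, pre_iff, pre_iff, and_iff_right_iff_imp]
  rintro (⟨a, h⟩ | ⟨a, h⟩) rfl <;> exact List.cons_ne_self a _ h.symm

theorem freeProdT₁_reachable_emptyWord :
    ∀ (l : List (Letter fun _ : ι => Fin 2)) (hl : Adm u l),
      (freeProdT₁ u).Reachable (emptyWord u) ⟨l, hl⟩
  | [], _ => .refl _
  | a :: l, hl => (freeProdT₁_reachable_emptyWord l hl.tail).trans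
      (freeProdT₁_adj_iff.2 (.inl ⟨a, rfl⟩)).reachable

theorem freeProdT₁_connected : (freeProdT₁ u).Connected :=
  (SimpleGraph.connected_iff_exists_forall_reachable _).2
    ⟨emptyWord u, fun v => freeProdT₁_reachable_emptyWord v.1 v.2⟩

theorem freeProdT₁_eq_tail_of_adj_of_length_lt {v x : Word u} (hx : (freeProdT₁ u).Adj v x)
    (hlt : x.1.length < v.1.length) : x.1 = v.1.tail := by
  rcases freeProdT₁_adj_iff.1 hx with ⟨a, h⟩ | ⟨a, h⟩
  · simp [h] at hlt
  · simp [h]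

theorem freeProdT₁_isAcyclic : (freeProdT₁ u).IsAcyclic := by
  refine SimpleGraph.isAcyclic_of_unique_lower_neighbor (fun v : Word u => v.1.length)
    (fun v w hvw => ?_) (fun v x y hx hy hxv hyv => ?_)
  · rcases freeProdT₁_adj_iff.1 hvw with ⟨a, h⟩ | ⟨a, h⟩ <;> simp [h]
  · exact Subtype.ext ((freeProdT₁_eq_tail_of_adj_of_length_lt hx hxv).trans
      (freeProdT₁_eq_tail_of_adj_of_length_lt hy hyv).symm)

def toggleHead (u : ι → Fin 2) (l : List (Letter fun _ : ι => Fin 2)) (j : ι) :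
    List (Letter fun _ : ι => Fin 2) :=
  if ∀ b ∈ l.head?, j ≠ b.1 then ⟨j, (upd u l j).rev⟩ :: l else l.tail

theorem Adm.toggleHead {l : List (Letter fun _ : ι => Fin 2)} (h : Adm u l) (j : ι) :
    Adm u (toggleHead u l j) := by
  unfold _root_.toggleHead
  split_ifs with hj
  · exact h.cons hj (fin_two_ne_iff_eq_rev.2 rfl)
  · exact h.tail

theorem toggleHead_injective (l : List (Letter fun _ : ι => Fin 2)) :
    Function.Injective (toggleHead u l) := by
  intro j k h
  unfold toggleHead at h
  split_ifs at h with hj hk hk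
  · exact congrArg Sigma.fst (List.cons_eq_cons.1 h).1
  · exact absurd (congrArg List.length h) (by simp only [List.length_cons, List.length_tail]; omega)
  · exact absurd (congrArg List.length h) (by simp only [List.length_cons, List.length_tail]; omega)
  · cases l with
    | nil => simp at hj
    | cons a t => simp_all

def Word.toggle (v : Word u) (j : ι) : Word u :=
  ⟨toggleHead u v.1 j, v.2.toggleHead j⟩

theorem Word.adj_toggle (v : Word u) (j : ι) : (freeProdT₁ u).Adj v (v.toggle j) := by
  rw [freeProdT₁_adj_iff, Word.toggle]
  unfold toggleHead
  split_ifs with h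
  · exact .inl ⟨_, rfl⟩
  · obtain ⟨b, hb, -⟩ := not_forall₂.1 h
    exact .inr ⟨b, (List.cons_head?_tail hb).symm⟩

theorem Word.exists_eq_toggle_of_adj {v w : Word u} (h : (freeProdT₁ u).Adj v w) :
    ∃ j, w = v.toggle j := by
  rcases freeProdT₁_adj_iff.1 h with ⟨⟨j, x⟩, hw⟩ | ⟨⟨j, x⟩, hv⟩
  · have hw' : Adm u (⟨j, x⟩ :: v.1) := hw ▸ w.2
    have hj : ∀ b ∈ v.1.head?, j ≠ b.1 := (List.isChain_cons.1 hw'.1).1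
    refine ⟨j, Subtype.ext (?_ : w.1 = toggleHead u v.1 j)⟩
    rw [toggleHead, if_pos hj, hw, hw'.head_eq_rev]
  · have hj : ¬∀ b ∈ v.1.head?, j ≠ b.1 := by simp [hv]
    refine ⟨j, Subtype.ext (?_ : w.1 = toggleHead u v.1 j)⟩
    rw [toggleHead, if_neg hj, hv, List.tail_cons]

theorem freeProdT₁_neighborSet (v : Word u) : (freeProdT₁ u).neighborSet v = Set.range v.toggle :=
  Set.ext fun _ => ⟨fun h => (Word.exists_eq_toggle_of_adj h).imp fun _ => Eq.symm,
    by rintro ⟨j, rfl⟩; exact v.adj_toggle j⟩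

theorem freeProdT₁_ncard_neighborSet (v : Word u) :
    ((freeProdT₁ u).neighborSet v).ncard = Nat.card ι := by
  rw [freeProdT₁_neighborSet]
  exact Set.ncard_range_of_injective fun j k h => toggleHead_injective v.1 (congrArg Subtype.val h)

end FreeProdT₁

/-- The free product of `n` copies of the single-edge graph `T₁`
is a tree which is regular of degree `n`. -/
theorem stmt7 (n : ℕ) (u : ∀ _ : Fin n, Fin 2) :
    (freeProd (fun _ : Fin n => (⊤ : SimpleGraph (Fin 2))) u).IsTree ∧
    ∀ v : Word u,
      ((freeProd (fun _ : Fin n => (⊤ : SimpleGraph (Fin 2))) u).neighborSet v).ncard = n :=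
  ⟨⟨freeProdT₁_connected, freeProdT₁_isAcyclic⟩,
    fun v => (freeProdT₁_ncard_neighborSet v).trans (Nat.card_fin n)⟩
end

section
/- Two free products of the same connected simple graphs Γ₁, …, Γₙ constructed with respect to different initial base tuples (u₁,…,uₙ) and (u₁',…,uₙ') in V₁ × ⋯ × Vₙ are isomorphic as graphs. -/
variable {ι : Type} [DecidableEq ι]

/-! A word is read from its end: its last letter is the first one applied to the base tuple
(see `upd`). If `u` and `u'` differ only in the coordinate `j`, the two free products are
identified by `rebase u u' j`: a word whose first letter is `⟨j, u' j⟩` loses it, a word whose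
first letter has a colour other than `j` (or the empty word) gets `⟨j, u j⟩` as a new first
letter, and all other words are kept. This map preserves the state `upd` and admissibility, it
commutes with putting letters in front of a nonempty word, and it maps the copy of `G j` through
the empty word onto the corresponding copy for `u'`; hence it preserves adjacency. Its inverse
is `rebase u' u j`.
Changing the base tuple one coordinate at a time gives the theorem. -/

open Relation

variable {V : ι → Type}

lemma Function.update_eq_of_forall_ne {α : Type*} [DecidableEq α] {β : α → Type*}
    {f g : ∀ a, β a} {a : α} (h : ∀ b ≠ a, f b = g b) : Function.update f a (g a) = g :=
  Function.update_eq_iff.2 ⟨rfl, h⟩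

lemma Function.update_eq_update_of_forall_ne {α : Type*} [DecidableEq α] {β : α → Type*}
    {f g : ∀ a, β a} {a : α} (h : ∀ b ≠ a, f b = g b) (x : β a) :
    Function.update f a x = Function.update g a x :=
  Function.update_eq_iff.2 ⟨by simp, fun b hb => by simp [hb, h b hb]⟩

lemma List.forall_cons_suffix_concat {α : Type*} {P : α → List α → Prop} {w : List α}
    {b : α} :
    (∀ a p, a :: p <:+ w ++ [b] → P a p) ↔ P b [] ∧ ∀ a p, a :: p <:+ w → P a (p ++ [b]) := by
  refine ⟨fun h => ⟨h b [] (List.suffix_append w [b]), fun a p ⟨s, hs⟩ => h a _ ⟨s, ?_⟩⟩, ?_⟩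
  · simp [← hs]
  rintro ⟨hb, hw⟩ a p hp
  obtain ⟨t, hpt, ht⟩ := (List.suffix_concat_iff.1 hp).resolve_left (List.cons_ne_nil a p)
  cases t with
  | nil =>
    obtain ⟨rfl, rfl⟩ : a = b ∧ p = [] := by simpa using hpt
    exact hb
  | cons a' t =>
    obtain ⟨rfl, rfl⟩ : a = a' ∧ p = t ++ [b] := by simpa using hpt
    exact hw a t ht

lemma upd_append (u : ∀ i, V i) (w t : List (Letter V)) :
    upd u (w ++ t) = upd (upd u t) w := by
  induction w with
  | nil => rfl
  | cons a w ih => simp [upd, ih]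

lemma upd_concat (u : ∀ i, V i) (w : List (Letter V)) (b : Letter V) :
    upd u (w ++ [b]) = upd (Function.update u b.1 b.2) w := by
  rw [upd_append]; rfl

lemma adm_iff (u : ∀ i, V i) (w : List (Letter V)) :
    Adm u w ↔ w.IsChain (fun a b => a.1 ≠ b.1) ∧
      ∀ (a : Letter V) (p : List (Letter V)), a :: p <:+ w → a.2 ≠ upd u p a.1 :=
  Iff.rfl

@[simp] lemma adm_nil (u : ∀ i, V i) : Adm u [] := (emptyWord u).2

lemma adm_concat (u : ∀ i, V i) (w : List (Letter V)) (b : Letter V) :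
    Adm u (w ++ [b]) ↔
      Adm (Function.update u b.1 b.2) w ∧ b.2 ≠ u b.1 ∧ ∀ a ∈ w.getLast?, a.1 ≠ b.1 := by
  simp only [adm_iff, List.isChain_append, List.forall_cons_suffix_concat, upd_concat]
  simp only [ne_eq, List.IsChain.singleton, Option.mem_def, List.head?_cons, Option.some.injEq,
    forall_eq', true_and, upd]
  tauto

lemma adm_singleton (u : ∀ i, V i) (a : Letter V) : Adm u [a] ↔ a.2 ≠ u a.1 := by
  simpa using adm_concat u [] a

@[elab_as_elim]
theorem cases_lastLetter {j : ι} (c : V j) {motive : List (Letter V) → Prop}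
    (w : List (Letter V)) (nil : motive [])
    (drop : ∀ w, motive (w ++ [⟨j, c⟩]))
    (keep : ∀ w x, x ≠ c → motive (w ++ [⟨j, x⟩]))
    (other : ∀ w (b : Letter V), b.1 ≠ j → motive (w ++ [b])) : motive w := by
  rcases List.eq_nil_or_concat w with rfl | ⟨w, ⟨i, x⟩, rfl⟩
  · exact nil
  rw [List.concat_eq_append]
  by_cases hi : i = j
  · subst hi
    by_cases hx : x = c
    · subst hx; exact drop w
    · exact keep w x hx
  · exact other w ⟨i, x⟩ hi

open Classical in
noncomputable def rebase (u u' : ∀ i, V i) (j : ι) (w : List (Letter V)) : List (Letter V) :=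
  match w.reverse with
  | [] => [⟨j, u j⟩]
  | a :: r => if a = ⟨j, u' j⟩ then r.reverse else if a.1 = j then w else w ++ [⟨j, u j⟩]

section rebase
variable (u u' : ∀ i, V i) (j : ι)

lemma rebase_nil : rebase u u' j [] = [⟨j, u j⟩] := by
  simp [rebase]

lemma rebase_concat_self (w : List (Letter V)) :
    rebase u u' j (w ++ [⟨j, u' j⟩]) = w := by
  simp [rebase]

lemma rebase_concat_of_ne {w : List (Letter V)} {x : V j} (hx : x ≠ u' j) :
    rebase u u' j (w ++ [⟨j, x⟩]) = w ++ [⟨j, x⟩] := by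
  simp [rebase, hx]

lemma rebase_concat_of_fst_ne {w : List (Letter V)} {b : Letter V} (hb : b.1 ≠ j) :
    rebase u u' j (w ++ [b]) = w ++ [b] ++ [⟨j, u j⟩] := by
  obtain ⟨i, x⟩ := b
  simp [rebase, hb]

lemma rebase_cons_of_ne_nil (a : Letter V) {w : List (Letter V)} (hw : w ≠ []) :
    rebase u u' j (a :: w) = a :: rebase u u' j w := by
  induction w using cases_lastLetter (u' j) with
  | nil => exact absurd rfl hw
  | drop w => rw [rebase_concat_self]; exact rebase_concat_self u u' j (a :: w)
  | keep w x hx =>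
    rw [rebase_concat_of_ne _ _ _ hx]; exact rebase_concat_of_ne u u' j (w := a :: w) hx
  | other w b hb =>
    rw [rebase_concat_of_fst_ne _ _ _ hb]; exact rebase_concat_of_fst_ne u u' j (w := a :: w) hb

lemma rebase_cons {a : Letter V} {w : List (Letter V)} (h : w ≠ [] ∨ a.1 ≠ j) :
    rebase u u' j (a :: w) = a :: rebase u u' j w := by
  by_cases hw : w = []
  · subst hw
    rw [rebase_nil]
    exact rebase_concat_of_fst_ne u u' j (w := []) (h.resolve_left (not_not.2 rfl))
  · exact rebase_cons_of_ne_nil u u' j a hw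

lemma rebase_rebase {w : List (Letter V)} (hw : Adm u w) :
    rebase u' u j (rebase u u' j w) = w := by
  induction w using cases_lastLetter (u' j) with
  | nil => exact rebase_concat_self u' u j []
  | drop w =>
    have hlast := ((adm_concat _ _ _).1 hw).2.2
    rw [rebase_concat_self]
    rcases List.eq_nil_or_concat w with rfl | ⟨w, b, rfl⟩
    · exact rebase_nil u' u j
    · rw [List.concat_eq_append] at hlast ⊢
      exact rebase_concat_of_fst_ne u' u j (hlast b (by simp))
  | keep w x hx =>
    have hxu : x ≠ u j := ((adm_concat _ _ _).1 hw).2.1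
    rw [rebase_concat_of_ne _ _ _ hx, rebase_concat_of_ne _ _ _ hxu]
  | other w b hb => rw [rebase_concat_of_fst_ne _ _ _ hb, rebase_concat_self]

end rebase

open Classical in
/-- The vertex `x` of the copy of `G j` that contains the empty word. -/
noncomputable def rootWord (u : ∀ i, V i) (j : ι) (x : V j) : List (Letter V) :=
  if x = u j then [] else [⟨j, x⟩]

lemma symmGen_pre_rootWord (G : ∀ i, SimpleGraph (V i)) (u : ∀ i, V i) {j : ι} {x y : V j}
    (hxy : (G j).Adj x y) : SymmGen (Pre G u) (rootWord u j x) (rootWord u j y) := by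
  unfold rootWord
  split_ifs with hx hy hy
  · exact absurd (hx.trans hy.symm) hxy.ne
  · subst hx; exact .of_rel (.inr ⟨j, y, hxy, rfl⟩)
  · subst hy; exact .of_rel_symm (.inr ⟨j, x, hxy.symm, rfl⟩)
  · exact .of_rel (.inl ⟨[], j, x, y, hxy, rfl, rfl⟩)

section agreeOffOne
variable {u u' : ∀ i, V i} {j : ι}

lemma upd_rebase (h : ∀ i ≠ j, u i = u' i) (w : List (Letter V)) :
    upd u' (rebase u u' j w) = upd u w := by
  have h' : ∀ i ≠ j, u' i = u i := fun i hi => (h i hi).symm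
  induction w using cases_lastLetter (u' j) with
  | nil => exact Function.update_eq_of_forall_ne h'
  | drop w => rw [rebase_concat_self, upd_concat, Function.update_eq_of_forall_ne h]
  | keep w x hx =>
    rw [rebase_concat_of_ne _ _ _ hx, upd_concat, upd_concat,
      Function.update_eq_update_of_forall_ne h]
  | other w b hb =>
    rw [rebase_concat_of_fst_ne _ _ _ hb, upd_concat, Function.update_eq_of_forall_ne h']

lemma adm_rebase (h : ∀ i ≠ j, u i = u' i) (hne : u j ≠ u' j) {w : List (Letter V)}
    (hw : Adm u w) : Adm u' (rebase u u' j w) := by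
  induction w using cases_lastLetter (u' j) with
  | nil => exact (adm_singleton u' _).2 hne
  | drop w =>
    rw [rebase_concat_self]
    simpa [Function.update_eq_of_forall_ne h] using ((adm_concat _ _ _).1 hw).1
  | keep w x hx =>
    obtain ⟨hw, -, hlast⟩ := (adm_concat _ _ _).1 hw
    rw [rebase_concat_of_ne _ _ _ hx, adm_concat]
    exact ⟨by simpa [Function.update_eq_update_of_forall_ne h] using hw, hx, hlast⟩
  | other w b hb =>
    rw [rebase_concat_of_fst_ne _ _ _ hb, adm_concat]
    refine ⟨?_, hne, by simp [hb]⟩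
    simpa [Function.update_eq_of_forall_ne fun i hi => (h i hi).symm] using hw

lemma rebase_nil_eq_rootWord (hne : u j ≠ u' j) : rebase u u' j [] = rootWord u' j (u j) := by
  rw [rebase_nil, rootWord, if_neg hne]

lemma rebase_singleton_eq_rootWord (x : V j) :
    rebase u u' j [⟨j, x⟩] = rootWord u' j x := by
  unfold rootWord
  split_ifs with hx
  · subst hx; exact rebase_concat_self u u' j []
  · exact rebase_concat_of_ne u u' j (w := []) hx

lemma symmGen_pre_rebase (G : ∀ i, SimpleGraph (V i)) (h : ∀ i ≠ j, u i = u' i)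
    (hne : u j ≠ u' j) {v w : List (Letter V)} (hvw : Pre G u v w) :
    SymmGen (Pre G u') (rebase u u' j v) (rebase u u' j w) := by
  rcases hvw with ⟨p, i, a, b, hab, rfl, rfl⟩ | ⟨i, b, hb, rfl⟩
  · by_cases hpi : p ≠ [] ∨ i ≠ j
    · rw [rebase_cons _ _ _ hpi, rebase_cons _ _ _ hpi]
      exact .of_rel (.inl ⟨_, i, a, b, hab, rfl, rfl⟩)
    · obtain ⟨rfl, rfl⟩ : p = [] ∧ i = j := by tauto
      rw [rebase_singleton_eq_rootWord, rebase_singleton_eq_rootWord]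
      exact symmGen_pre_rootWord G u' hab
  · by_cases hvi : v ≠ [] ∨ i ≠ j
    · rw [rebase_cons _ _ _ hvi]
      exact .of_rel (.inr ⟨i, b, by rwa [upd_rebase h], rfl⟩)
    · obtain ⟨rfl, rfl⟩ : v = [] ∧ i = j := by tauto
      rw [rebase_nil_eq_rootWord hne, rebase_singleton_eq_rootWord]
      exact symmGen_pre_rootWord G u' hb

noncomputable def rebaseEquiv (h : ∀ i ≠ j, u i = u' i) (hne : u j ≠ u' j) :
    Word u ≃ Word u' where
  toFun w := ⟨rebase u u' j w.1, adm_rebase h hne w.2⟩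
  invFun w := ⟨rebase u' u j w.1, adm_rebase (fun i hi => (h i hi).symm) hne.symm w.2⟩
  left_inv w := Subtype.ext (rebase_rebase u u' j w.2)
  right_inv w := Subtype.ext (rebase_rebase u' u j w.2)

lemma rebaseEquiv_symm (h : ∀ i ≠ j, u i = u' i) (hne : u j ≠ u' j) :
    (rebaseEquiv h hne).symm = rebaseEquiv (fun i hi => (h i hi).symm) hne.symm :=
  rfl

lemma freeProd_adj_rebaseEquiv (G : ∀ i, SimpleGraph (V i)) (h : ∀ i ≠ j, u i = u' i)
    (hne : u j ≠ u' j) {x y : Word u} (hxy : (freeProd G u).Adj x y) :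
    (freeProd G u').Adj (rebaseEquiv h hne x) (rebaseEquiv h hne y) :=
  ⟨(rebaseEquiv h hne).injective.ne hxy.1,
    hxy.2.elim (symmGen_pre_rebase G h hne) (symmGen_pre_rebase G h hne · |>.symm)⟩

noncomputable def rebaseIso (G : ∀ i, SimpleGraph (V i)) (h : ∀ i ≠ j, u i = u' i)
    (hne : u j ≠ u' j) : freeProd G u ≃g freeProd G u' where
  toEquiv := rebaseEquiv h hne
  map_rel_iff' {x y} := by
    refine ⟨fun hxy => ?_, freeProd_adj_rebaseEquiv G h hne⟩
    have := freeProd_adj_rebaseEquiv G (fun i hi => (h i hi).symm) hne.symm hxy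
    rwa [← rebaseEquiv_symm h hne, Equiv.symm_apply_apply, Equiv.symm_apply_apply] at this

theorem nonempty_iso_freeProd_of_forall_ne (G : ∀ i, SimpleGraph (V i))
    (h : ∀ i ≠ j, u i = u' i) : Nonempty (freeProd G u ≃g freeProd G u') := by
  by_cases hne : u j = u' j
  · obtain rfl : u = u' := funext fun i => if hi : i = j then hi ▸ hne else h i hi
    exact ⟨.refl⟩
  · exact ⟨rebaseIso G h hne⟩

end agreeOffOne

theorem nonempty_iso_freeProd_of_forall_notMem (G : ∀ i, SimpleGraph (V i)) (s : Finset ι)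
    (u u' : ∀ i, V i) (h : ∀ i ∉ s, u i = u' i) : Nonempty (freeProd G u ≃g freeProd G u') := by
  induction s using Finset.induction_on generalizing u with
  | empty =>
    obtain rfl : u = u' := funext fun i => h i (Finset.notMem_empty i)
    exact ⟨.refl⟩
  | insert j s _ ih =>
    obtain ⟨e₁⟩ := nonempty_iso_freeProd_of_forall_ne G (u' := Function.update u j (u' j))
      fun i hi => (Function.update_of_ne hi _ _).symm
    obtain ⟨e₂⟩ := ih (Function.update u j (u' j)) fun i hi => by
      rcases eq_or_ne i j with rfl | hij
      · simp
      · simpa [hij] using h i (by simp [hij, hi])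
    exact ⟨e₁.trans e₂⟩

theorem stmt9_general {n : ℕ} {V : Fin n → Type} (G : ∀ i, SimpleGraph (V i))
    (u u' : ∀ i, V i) :
    Nonempty (freeProd G u ≃g freeProd G u') :=
  nonempty_iso_freeProd_of_forall_notMem G Finset.univ u u' fun i hi =>
    (hi (Finset.mem_univ i)).elim

/-- Free products of the same connected graphs with respect to different
initial base tuples are isomorphic. -/
theorem stmt9 {n : ℕ} {V : Fin n → Type} (G : ∀ i, SimpleGraph (V i))
    (u u' : ∀ i, V i) (hconn : ∀ i, (G i).Connected) :
    Nonempty (freeProd G u ≃g freeProd G u') :=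
  stmt9_general G u u'
end

section
/- In the free product Γ = ⋆ᵢ₌₁ⁿ Γᵢ of connected simple graphs, any two paths of minimal length between two fixed vertices ṽ and w̃ have the same set of transition points. -/
/-!
Removing a vertex `x` (a reduced word) from the free product separates it into pieces: the
proper extensions of `x`, grouped by the factor of the letter just above `x`, and the rest. The
factor of an edge at `x` is determined by the piece its other endpoint lies in. Along a path
from `v` to `w`, the edges entering and leaving an interior vertex `x` point into the pieces of
`v` and of `w`. Hence `x` is a transition point exactly when `x ∉ {v, w}` and these two pieces
are attached to `x` through sheets of distinct factors, a condition that does not depend on the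
path. Walks of minimal length are paths.
-/

variable {ι : Type} [DecidableEq ι]

/-- The edge `{v, w}` of the free product lies in a sheet of the factor `j`. -/
def HasColor {ι : Type} [DecidableEq ι] {V : ι → Type} (G : ∀ i, SimpleGraph (V i))
    (u : ∀ i, V i) (j : ι) (v w : List (Letter V)) : Prop :=
  (∃ (p : List (Letter V)) (a b : V j),
      (G j).Adj a b ∧ v = ⟨j, a⟩ :: p ∧ w = ⟨j, b⟩ :: p) ∨
  (∃ a : V j, (G j).Adj (upd u v j) a ∧ w = ⟨j, a⟩ :: v) ∨
  (∃ a : V j, (G j).Adj (upd u w j) a ∧ v = ⟨j, a⟩ :: w)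

/-- `x` is a transition point of the walk `p`: two consecutive edges of `p`
meeting at `x` lie in sheets of distinct factors. -/
def IsTransitionPt {ι : Type} [DecidableEq ι] {V : ι → Type} {G : ∀ i, SimpleGraph (V i)}
    {u : ∀ i, V i} {s t : Word u} (p : (freeProd G u).Walk s t) (x : Word u) : Prop :=
  ∃ (m : ℕ) (h : m + 1 < p.darts.length) (j j' : ι), j ≠ j' ∧
    (p.darts[m]'(by omega)).snd = x ∧
    HasColor G u j (p.darts[m]'(by omega)).fst.1 (p.darts[m]'(by omega)).snd.1 ∧
    HasColor G u j' (p.darts[m+1]'h).fst.1 (p.darts[m+1]'h).snd.1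

theorem SimpleGraph.Walk.isPath_of_forall_length_le {X : Type*} {G : SimpleGraph X} {a b : X}
    (p : G.Walk a b) (hp : ∀ r : G.Walk a b, p.length ≤ r.length) : p.IsPath := by
  refine p.isPath_of_length_eq_dist (le_antisymm ?_ (dist_le p))
  obtain ⟨r, hr⟩ := p.reachable.exists_walk_length_eq_dist
  exact hr ▸ hp r

section Branch

variable {ι : Type} {V : ι → Type}

open Classical in
/-- The factor of the letter of `y` directly above its suffix `x`, or `none` when `x` is not a
proper suffix of `y`: the piece of `y` at `x`. -/
noncomputable def branch (x : List (Letter V)) : List (Letter V) → Option ι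
  | [] => none
  | a :: y => if y = x then some a.1 else branch x y

theorem branch_cons_of_eq {x y : List (Letter V)} (a : Letter V) (h : y = x) :
    branch x (a :: y) = some a.1 := by
  simp only [branch, if_pos h]

theorem branch_cons_of_ne {x y : List (Letter V)} (a : Letter V) (h : y ≠ x) :
    branch x (a :: y) = branch x y := by
  simp only [branch, if_neg h]

theorem branch_eq_none_of_length_le {x : List (Letter V)} :
    ∀ {y : List (Letter V)}, y.length ≤ x.length → branch x y = none
  | [], _ => rfl
  | a :: y, h => by
    rw [List.length_cons] at h
    rw [branch_cons_of_ne a (by rintro rfl; omega), branch_eq_none_of_length_le (by omega)]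

/-- The factor of the sheets of the edges at `x` pointing into the piece of `y`: all edges at `x`
that do not extend `x` lie in a sheet of the factor of the first letter of `x`. -/
noncomputable def sheetToward (x y : List (Letter V)) : Option ι :=
  (branch x y).or (x.head?.map Sigma.fst)

end Branch

section HasColor

variable {V : ι → Type} {G : ∀ i, SimpleGraph (V i)} {u : ∀ i, V i} {j : ι}

theorem HasColor.symm {y z : List (Letter V)} (h : HasColor G u j y z) : HasColor G u j z y := by
  rcases h with ⟨p, a, b, hab, rfl, rfl⟩ | h | h
  · exact Or.inl ⟨p, b, a, hab.symm, rfl, rfl⟩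
  · exact Or.inr (Or.inr h)
  · exact Or.inr (Or.inl h)

theorem exists_hasColor_of_adj {y z : Word u} (h : (freeProd G u).Adj y z) :
    ∃ j, HasColor G u j y.1 z.1 := by
  rw [freeProd, SimpleGraph.fromRel_adj] at h
  rcases h with ⟨-, h | h⟩ <;> rcases h with ⟨p, j, a, b, hab, h1, h2⟩ | ⟨j, a, hadj, h2⟩
  · exact ⟨j, Or.inl ⟨p, a, b, hab, h1, h2⟩⟩
  · exact ⟨j, Or.inr (Or.inl ⟨a, hadj, h2⟩)⟩
  · exact ⟨j, Or.inl ⟨p, b, a, hab.symm, h2, h1⟩⟩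
  · exact ⟨j, Or.inr (Or.inr ⟨a, hadj, h2⟩)⟩

theorem HasColor.branch_eq {x y z : List (Letter V)} (hc : HasColor G u j y z)
    (hy : y ≠ x) (hz : z ≠ x) : branch x y = branch x z := by
  rcases hc with ⟨p, a, b, -, rfl, rfl⟩ | ⟨a, -, rfl⟩ | ⟨a, -, rfl⟩
  · by_cases hp : p = x
    · rw [branch_cons_of_eq _ hp, branch_cons_of_eq _ hp]
    · rw [branch_cons_of_ne _ hp, branch_cons_of_ne _ hp]
  · rw [branch_cons_of_ne _ hy]
  · rw [branch_cons_of_ne _ hz]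

theorem HasColor.sheetToward_eq {x y : List (Letter V)} (hc : HasColor G u j y x) :
    sheetToward x y = some j := by
  rcases hc with ⟨p, a, b, -, rfl, rfl⟩ | ⟨a, -, rfl⟩ | ⟨a, -, rfl⟩
  · rw [sheetToward, branch_cons_of_ne _ (List.cons_ne_self _ _).symm,
      branch_eq_none_of_length_le (by simp)]
    rfl
  · rw [sheetToward, branch_eq_none_of_length_le (by simp)]
    rfl
  · rw [sheetToward, branch_cons_of_eq _ rfl]
    rfl

end HasColor

section Walk

open SimpleGraph.Walk

variable {V : ι → Type} {G : ∀ i, SimpleGraph (V i)} {u : ∀ i, V i} {v w : Word u}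

theorem branch_eq_of_notMem_support {x : Word u} {a b : Word u}
    (r : (freeProd G u).Walk a b) (hx : x ∉ r.support) : branch x.1 a.1 = branch x.1 b.1 := by
  induction r with
  | nil => rfl
  | cons hadj r ih =>
    rw [support_cons, List.mem_cons, not_or] at hx
    obtain ⟨j, hc⟩ := exists_hasColor_of_adj hadj
    rw [hc.branch_eq (fun h => hx.1 (Subtype.ext h).symm) ?_, ih hx.2]
    exact fun h => hx.2 (Subtype.ext h ▸ start_mem_support r)

theorem sheetToward_start_eq {p : (freeProd G u).Walk v w} (hp : p.IsPath) {m : ℕ}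
    (hm : m < p.length) {j : ι} (hc : HasColor G u j (p.getVert m).1 (p.getVert (m + 1)).1) :
    sheetToward (p.getVert (m + 1)).1 v.1 = some j := by
  have hx : p.getVert (m + 1) ∉ (p.take m).support := by
    rw [mem_support_iff_exists_getVert]
    rintro ⟨n, hn, -⟩
    rw [take_getVert] at hn
    have := hp.getVert_injOn (show min m n ≤ p.length by omega)
      (show m + 1 ≤ p.length by omega) hn
    omega
  rw [sheetToward, branch_eq_of_notMem_support _ hx]
  exact hc.sheetToward_eq

theorem sheetToward_end_eq {p : (freeProd G u).Walk v w} (hp : p.IsPath) {m : ℕ}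
    (hm : m < p.length) {j : ι} (hc : HasColor G u j (p.getVert m).1 (p.getVert (m + 1)).1) :
    sheetToward (p.getVert m).1 w.1 = some j := by
  have key := sheetToward_start_eq hp.reverse (m := p.length - (m + 1)) (j := j)
    (by rw [length_reverse]; omega)
  simp only [getVert_reverse] at key
  rw [show p.length - (p.length - (m + 1)) = m + 1 by omega,
    show p.length - (p.length - (m + 1) + 1) = m by omega] at key
  exact key hc.symm

theorem isTransitionPt_iff {p : (freeProd G u).Walk v w} (hp : p.IsPath) (x : Word u) :
    IsTransitionPt p x ↔ x ≠ v ∧ x ≠ w ∧ sheetToward x.1 v.1 ≠ sheetToward x.1 w.1 := by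
  simp only [IsTransitionPt, darts_getElem_eq_getVert, length_darts]
  constructor
  · rintro ⟨m, hm, j, j', hjj', rfl, hc, hc'⟩
    refine ⟨?_, ?_, ?_⟩
    · rw [Ne, hp.getVert_eq_start_iff (by omega)]
      omega
    · rw [Ne, hp.getVert_eq_end_iff (by omega)]
      omega
    · rwa [sheetToward_start_eq hp (by omega) hc, sheetToward_end_eq hp hm hc', Ne,
        Option.some_inj]
  · rintro ⟨hxv, hxw, hne⟩
    have hx : x ∈ p.support := by
      by_contra hx
      exact hne (by rw [sheetToward, sheetToward, branch_eq_of_notMem_support p hx])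
    obtain ⟨k, rfl, hk⟩ := mem_support_iff_exists_getVert.mp hx
    obtain ⟨m, rfl⟩ := Nat.exists_eq_succ_of_ne_zero (n := k) (by rintro rfl; simp at hxv)
    have hm : m + 1 < p.length := lt_of_le_of_ne hk (fun h => hxw (by simp [h]))
    obtain ⟨j, hc⟩ := exists_hasColor_of_adj (p.adj_getVert_succ (by omega : m < p.length))
    obtain ⟨j', hc'⟩ := exists_hasColor_of_adj (p.adj_getVert_succ hm)
    refine ⟨m, hm, j, j', ?_, rfl, hc, hc'⟩
    rintro rfl
    exact hne (by rw [sheetToward_start_eq hp (by omega) hc, sheetToward_end_eq hp hm hc'])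

end Walk

theorem stmt10_general {n : ℕ} {V : Fin n → Type} (G : ∀ i, SimpleGraph (V i))
    (u : ∀ i, V i)
    {v w : Word u} (p q : (freeProd G u).Walk v w)
    (hp : ∀ r : (freeProd G u).Walk v w, p.length ≤ r.length)
    (hq : ∀ r : (freeProd G u).Walk v w, q.length ≤ r.length) :
    ∀ x : Word u, IsTransitionPt p x ↔ IsTransitionPt q x := by
  intro x
  rw [isTransitionPt_iff (p.isPath_of_forall_length_le hp),
    isTransitionPt_iff (q.isPath_of_forall_length_le hq)]

/-- Any two paths of minimal length between two fixed vertices of a free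
product of connected graphs have the same transition points. -/
theorem stmt10 {n : ℕ} {V : Fin n → Type} (G : ∀ i, SimpleGraph (V i))
    (u : ∀ i, V i) (hconn : ∀ i, (G i).Connected)
    {v w : Word u} (p q : (freeProd G u).Walk v w)
    (hp : ∀ r : (freeProd G u).Walk v w, p.length ≤ r.length)
    (hq : ∀ r : (freeProd G u).Walk v w, q.length ≤ r.length) :
    ∀ x : Word u, IsTransitionPt p x ↔ IsTransitionPt q x :=
  stmt10_general G u p q hp hq
end

section
/- Let Γ = ⋆ᵢ₌₁ⁿ Γᵢ be the free product of connected simple graphs with update function 𝐮, and for each i let αᵢ ∈ Aut(Γᵢ). Suppose β : V(Γ) → V(Γ) satisfies β(∅) = ∅ and β(ṽ·v) = β(ṽ)·β_{(ṽ,i)}(v) for letters v ∈ Vᵢ, where each β_{(ṽ,i)} ∈ Aut(Γᵢ) satisfies β_{(ṽ,i)}(u_i(ṽ)) = u_i(β(ṽ)). Then β is a graph automorphism of Γ. -/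
/-! The map β is a bijection of words whose inverse obeys the analogous recursion
`β⁻¹(w·y) = β⁻¹(w)·β_{(β⁻¹(w),i)}⁻¹(y)`. Admissibility of a word is a condition on each
letter relative to the word before it, and compatibility turns `x ≠ uᵢ(w)` into
`β_{(w,i)}(x) ≠ uᵢ(β(w))`, so β preserves and reflects admissibility. Edges inside a
sheet are moved by the automorphisms `β_{(w,i)}`, and an edge `w — w·x` (with `x` adjacent to
`uᵢ(w)`) goes to `β(w) — β(w)·β_{(w,i)}(x)`, again an edge because `β_{(w,i)}` maps `uᵢ(w)` to
`uᵢ(β(w))`; the same argument applies to β⁻¹. -/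

variable {ι : Type} [DecidableEq ι]

/-- The recursively defined map `β` on words: `β(∅) = ∅` and
`β(v·x) = β(v)·β_{(v,i)}(x)` for a letter `x` in the `i`-th factor
(words are stored in reverse, with the last letter first). -/
def betaMap {ι : Type} [DecidableEq ι] {V : ι → Type} (G : ∀ i, SimpleGraph (V i))
    (B : List (Letter V) → ∀ i, G i ≃g G i) : List (Letter V) → List (Letter V)
  | [] => []
  | ⟨i, x⟩ :: w => ⟨i, B w i x⟩ :: betaMap G B w

def betaInv {V : ι → Type} (G : ∀ i, SimpleGraph (V i))
    (B : List (Letter V) → ∀ i, G i ≃g G i) : List (Letter V) → List (Letter V)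
  | [] => []
  | ⟨i, y⟩ :: w => ⟨i, (B (betaInv G B w) i).symm y⟩ :: betaInv G B w

def IsUpdCompatible {V : ι → Type} (G : ∀ i, SimpleGraph (V i)) (u : ∀ i, V i)
    (B : List (Letter V) → ∀ i, G i ≃g G i) : Prop :=
  ∀ w : List (Letter V), Adm u w → ∀ i : ι,
    (∀ hne : w ≠ [], (w.head hne).1 ≠ i) → B w i (upd u w i) = upd u (betaMap G B w) i

section

variable {V : ι → Type} {G : ∀ i, SimpleGraph (V i)} {u : ∀ i, V i}
  {B : List (Letter V) → ∀ i, G i ≃g G i}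

theorem adm_cons_iff {a : Letter V} {p : List (Letter V)} :
    Adm u (a :: p) ↔
      Adm u p ∧ (∀ hne : p ≠ [], (p.head hne).1 ≠ a.1) ∧ a.2 ≠ upd u p a.1 := by
  have hchain : p.IsChain (fun a b : Letter V => a.1 ≠ b.1) →
      ((a :: p).IsChain (fun a b : Letter V => a.1 ≠ b.1) ↔
        ∀ hne : p ≠ [], (p.head hne).1 ≠ a.1) := by
    intro hp
    cases p with
    | nil => simp
    | cons b q => simp [List.isChain_cons_cons, hp, ne_comm]
  simp only [Adm, List.suffix_cons_iff]
  constructor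
  · rintro ⟨hc, hs⟩
    have hp : p.IsChain _ := hc.tail
    exact ⟨⟨hp, fun b q h => hs b q (Or.inr h)⟩, (hchain hp).1 hc, hs a p (Or.inl rfl)⟩
  · rintro ⟨⟨hp, hs⟩, hhead, ha⟩
    refine ⟨(hchain hp).2 hhead, fun b q h => ?_⟩
    rcases h with h | h
    · obtain ⟨rfl, rfl⟩ := List.cons.inj h
      exact ha
    · exact hs b q h

variable (G B) in
@[simp]
theorem betaInv_betaMap (w : List (Letter V)) : betaInv G B (betaMap G B w) = w := by
  induction w with
  | nil => rfl
  | cons a w ih => obtain ⟨i, x⟩ := a; simp [betaMap, betaInv, ih]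

variable (G B) in
@[simp]
theorem betaMap_betaInv (w : List (Letter V)) : betaMap G B (betaInv G B w) = w := by
  induction w with
  | nil => rfl
  | cons a w ih => obtain ⟨i, x⟩ := a; simp [betaMap, betaInv, ih]

variable (G B) in
def betaEquiv : List (Letter V) ≃ List (Letter V) :=
  ⟨betaMap G B, betaInv G B, betaInv_betaMap G B, betaMap_betaInv G B⟩

theorem head_fst_ne_betaMap_iff {w : List (Letter V)} {i : ι} :
    (∀ hne : betaMap G B w ≠ [], ((betaMap G B w).head hne).1 ≠ i) ↔
      ∀ hne : w ≠ [], (w.head hne).1 ≠ i := by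
  cases w with
  | nil => simp [betaMap]
  | cons a w => obtain ⟨j, x⟩ := a; simp [betaMap]

theorem adm_betaMap_iff (hB : IsUpdCompatible G u B) {w : List (Letter V)} :
    Adm u (betaMap G B w) ↔ Adm u w := by
  induction w with
  | nil => rfl
  | cons a q ih =>
    obtain ⟨i, x⟩ := a
    simp only [betaMap, adm_cons_iff, ih, head_fst_ne_betaMap_iff]
    refine and_congr_right fun hq => and_congr_right fun hhead => ?_
    rw [← hB q hq i hhead, (B q i).injective.ne_iff]

theorem pre_betaMap (hB : IsUpdCompatible G u B) {v w : List (Letter V)} (hv : Adm u v)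
    (hw : Adm u w) (h : Pre G u v w) : Pre G u (betaMap G B v) (betaMap G B w) := by
  rcases h with ⟨p, j, a, b, hab, rfl, rfl⟩ | ⟨j, a, hadj, rfl⟩
  · exact Or.inl ⟨betaMap G B p, j, B p j a, B p j b, (B p j).map_rel_iff.mpr hab, rfl, rfl⟩
  · refine Or.inr ⟨j, B v j a, ?_, rfl⟩
    rw [← hB v hv j (adm_cons_iff.mp hw).2.1]
    exact (B v j).map_rel_iff.mpr hadj

theorem pre_betaInv (hB : IsUpdCompatible G u B) {v w : List (Letter V)}
    (hv : Adm u (betaInv G B v)) (hw : Adm u (betaInv G B w)) (h : Pre G u v w) :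
    Pre G u (betaInv G B v) (betaInv G B w) := by
  rcases h with ⟨p, j, a, b, hab, rfl, rfl⟩ | ⟨j, a, hadj, rfl⟩
  · set e := B (betaInv G B p) j
    exact Or.inl ⟨betaInv G B p, j, e.symm a, e.symm b, e.symm.map_rel_iff.mpr hab, rfl, rfl⟩
  · set e := B (betaInv G B v) j
    refine Or.inr ⟨j, e.symm a, ?_, rfl⟩
    rw [← e.map_rel_iff, RelIso.apply_symm_apply, hB _ hv j (adm_cons_iff.mp hw).2.1]
    rwa [betaMap_betaInv]

theorem pre_betaMap_iff (hB : IsUpdCompatible G u B) {v w : List (Letter V)} (hv : Adm u v)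
    (hw : Adm u w) : Pre G u (betaMap G B v) (betaMap G B w) ↔ Pre G u v w := by
  refine ⟨fun h => ?_, pre_betaMap hB hv hw⟩
  simpa using pre_betaInv hB (by simpa using hv) (by simpa using hw) h

variable (G B) in
def betaMapWordEquiv (hB : IsUpdCompatible G u B) : Word u ≃ Word u :=
  (betaEquiv G B).subtypeEquiv fun _ => (adm_betaMap_iff hB).symm

theorem freeProd_adj_betaMapWordEquiv_iff (hB : IsUpdCompatible G u B) {v w : Word u} :
    (freeProd G u).Adj (betaMapWordEquiv G B hB v) (betaMapWordEquiv G B hB w) ↔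
      (freeProd G u).Adj v w := by
  simp only [freeProd, SimpleGraph.fromRel_adj, (betaMapWordEquiv G B hB).injective.ne_iff]
  exact and_congr_right fun _ =>
    or_congr (pre_betaMap_iff hB v.2 w.2) (pre_betaMap_iff hB w.2 v.2)

variable (G) in
def betaMapIso (hB : IsUpdCompatible G u B) : freeProd G u ≃g freeProd G u :=
  ⟨betaMapWordEquiv G B hB, freeProd_adj_betaMapWordEquiv_iff hB⟩

end

theorem stmt15_general {n : ℕ} {V : Fin n → Type} (G : ∀ i, SimpleGraph (V i))
    (u : ∀ i, V i)
    (B : List (Letter V) → ∀ i, G i ≃g G i)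
    (hB : ∀ w : List (Letter V), Adm u w → ∀ i : Fin n,
      (∀ hne : w ≠ [], (w.head hne).1 ≠ i) →
      B w i (upd u w i) = upd u (betaMap G B w) i) :
    ∃ φ : freeProd G u ≃g freeProd G u,
      ∀ v : Word u, (φ v).1 = betaMap G B v.1 :=
  ⟨betaMapIso G hB, fun _ => rfl⟩

/-- Given automorphisms `β_{(v,i)} ∈ Aut(Γᵢ)` satisfying the compatibility
condition `β_{(v,i)}(uᵢ(v)) = uᵢ(β(v))` for every vertex `v` and every
`i ≠ λ(v)`, the recursively defined map `β` is an automorphism of the free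
product. -/
theorem stmt15 {n : ℕ} {V : Fin n → Type} (G : ∀ i, SimpleGraph (V i))
    (u : ∀ i, V i) (hconn : ∀ i, (G i).Connected)
    (B : List (Letter V) → ∀ i, G i ≃g G i)
    (hB : ∀ w : List (Letter V), Adm u w → ∀ i : Fin n,
      (∀ hne : w ≠ [], (w.head hne).1 ≠ i) →
      B w i (upd u w i) = upd u (betaMap G B w) i) :
    ∃ φ : freeProd G u ≃g freeProd G u,
      ∀ v : Word u, (φ v).1 = betaMap G B v.1 :=
  stmt15_general G u B hB
end

section
/- Let Γ₁, …, Γₙ (n ≥ 3) be connected simple graphs each with at least two vertices, and suppose two of the factors are isomorphic. Then the automorphism group of ⋆ᵢ Γᵢ is non-discrete: for every k there exists a nontrivial automorphism fixing pointwise the ball of radius k around the base vertex ∅. -/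
variable {ι : Type} [DecidableEq ι]

/-!
The free product is tree-like: a word `p` cuts it, and the words `q ++ a :: p` fall into branches
according to the factor of `a`. Given `f : Γᵢ ≃g Γⱼ`, let `τ` (`swapLetter f`) be the involution
of letters sending `x ∈ Γᵢ` to `f x ∈ Γⱼ`, `y ∈ Γⱼ` to `f⁻¹ y ∈ Γᵢ` and fixing the other letters. If the last letter of
`p` lies in a third factor and the `i`- and `j`-coordinates of `p` correspond under `f`, then
applying `τ` to every letter above `p` on the `i`- and `j`-branches at `p`, and fixing all other
words, is an automorphism. It moves only words longer than `p`, hence (distance to `∅` being at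
least word length) fixes the ball of radius `|p|`; and such `p` exist of every length.
-/

namespace FreeProdGraph

variable {V : ι → Type} {G : ∀ i, SimpleGraph (V i)} {u : ∀ i, V i}

section Words

lemma upd_cons (c : Letter V) (w : List (Letter V)) :
    upd u (c :: w) = Function.update (upd u w) c.1 c.2 := by
  cases c; rfl

lemma adm_cons_iff {c : Letter V} {w : List (Letter V)} :
    Adm u (c :: w) ↔ Adm u w ∧ (∀ b ∈ w.head?, c.1 ≠ b.1) ∧ c.2 ≠ upd u w c.1 := by
  refine ⟨fun h => ⟨⟨h.1.tail, fun b q hq => h.2 b q (hq.trans (List.suffix_cons c w))⟩,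
    (List.isChain_cons.mp h.1).1, h.2 c w (List.suffix_refl _)⟩, ?_⟩
  rintro ⟨hw, hhead, hval⟩
  refine ⟨List.isChain_cons.mpr ⟨hhead, hw.1⟩, fun b q hq => ?_⟩
  rcases List.suffix_cons_iff.mp hq with hbq | hbq
  · obtain ⟨rfl, rfl⟩ := List.cons.inj hbq
    exact hval
  · exact hw.2 b q hbq

lemma exists_adm_cons {m : ι} [Nontrivial (V m)] {w : List (Letter V)} (hw : Adm u w)
    (hhead : ∀ b ∈ w.head?, m ≠ b.1) : ∃ x : V m, Adm u (⟨m, x⟩ :: w) := by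
  obtain ⟨x, hx⟩ := exists_ne (upd u w m)
  exact ⟨x, adm_cons_iff.mpr ⟨hw, hhead, hx⟩⟩

lemma exists_adm_length_ge {a b : ι} [Nontrivial (V a)] [Nontrivial (V b)] (hab : a ≠ b)
    (N : ℕ) :
    ∃ w : List (Letter V), Adm u w ∧ N ≤ w.length ∧ ∀ c ∈ w.head?, c.1 = a := by
  induction N with
  | zero => exact ⟨[], (emptyWord u).2, le_rfl, by simp⟩
  | succ N ih =>
    obtain ⟨w, hw, hlen, hhead⟩ := ih
    obtain ⟨x, hx⟩ := exists_adm_cons (hw := hw) fun c hc => hhead c hc ▸ hab.symm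
    obtain ⟨y, hy⟩ := exists_adm_cons (m := a) hx (by simpa using hab)
    exact ⟨_, hy, by simp; omega, by simp⟩

lemma length_le_succ_of_adj {v w : Word u} (h : (freeProd G u).Adj v w) :
    w.1.length ≤ v.1.length + 1 := by
  have length_of_pre {v w : List (Letter V)} (h : Pre G u v w) :
      w.length = v.length ∨ w.length = v.length + 1 := by
    rcases h with ⟨_, _, _, _, _, rfl, rfl⟩ | ⟨_, _, _, rfl⟩ <;> simp
  rcases (SimpleGraph.fromRel_adj _ _ _).mp h |>.2 with h | h <;>
    rcases length_of_pre h with h | h <;> omega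

lemma length_le_length_add_walk_length {v w : Word u} (W : (freeProd G u).Walk v w) :
    w.1.length ≤ v.1.length + W.length := by
  induction W with
  | nil => simp
  | cons h _ ih =>
    have := length_le_succ_of_adj h
    rw [SimpleGraph.Walk.length_cons]
    omega

section Factor

variable {m : ι} {w : List (Letter V)} (hw : Adm u w) (hhead : ∀ b ∈ w.head?, m ≠ b.1)

open scoped Classical in
noncomputable def factorWord (x : V m) : Word u :=
  if hx : x = upd u w m then ⟨w, hw⟩ else ⟨⟨m, x⟩ :: w, adm_cons_iff.mpr ⟨hw, hhead, hx⟩⟩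

lemma factorWord_upd : factorWord hw hhead (upd u w m) = ⟨w, hw⟩ := dif_pos rfl

lemma factorWord_of_ne {x : V m} (hx : x ≠ upd u w m) :
    factorWord hw hhead x = ⟨⟨m, x⟩ :: w, adm_cons_iff.mpr ⟨hw, hhead, hx⟩⟩ := dif_neg hx

/-- The vertices `w` and `⟨m, x⟩ :: w` (`x ≠ upd u w m`) span a copy of `G m` in the free
product, with `w` playing the role of the vertex `upd u w m`. -/
noncomputable def factorHom : G m →g freeProd G u where
  toFun := factorWord hw hhead
  map_rel' {x y} hxy := by
    refine (SimpleGraph.fromRel_adj _ _ _).mpr ?_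
    by_cases hx : x = upd u w m <;> by_cases hy : y = upd u w m
    · exact absurd (hx.trans hy.symm) hxy.ne
    · rw [hx, factorWord_upd, factorWord_of_ne _ _ hy]
      exact ⟨fun h => by simpa using congrArg (·.1.length) h,
        Or.inl (Or.inr ⟨m, y, hx ▸ hxy, rfl⟩)⟩
    · rw [hy, factorWord_upd, factorWord_of_ne _ _ hx]
      exact ⟨fun h => by simpa using congrArg (·.1.length) h,
        Or.inr (Or.inr ⟨m, x, hy ▸ hxy.symm, rfl⟩)⟩
    · rw [factorWord_of_ne _ _ hx, factorWord_of_ne _ _ hy]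
      exact ⟨fun h => hxy.ne (by simpa using congrArg Subtype.val h),
        Or.inl (Or.inl ⟨w, m, x, y, hxy, rfl, rfl⟩)⟩

end Factor

lemma reachable_emptyWord (hconn : ∀ m, (G m).Connected) (w : Word u) :
    (freeProd G u).Reachable (emptyWord u) w := by
  obtain ⟨w, hw⟩ := w
  induction w with
  | nil => rfl
  | cons c w ih =>
    obtain ⟨m, x⟩ := c
    obtain ⟨hw', hhead, hx⟩ := adm_cons_iff.mp hw
    have h := ((hconn m).preconnected (upd u w m) x).map (factorHom hw' hhead)
    change (freeProd G u).Reachable (factorWord hw' hhead _) (factorWord hw' hhead x) at h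
    rw [factorWord_upd, factorWord_of_ne _ _ hx] at h
    exact (ih hw').trans h

lemma length_le_dist (hconn : ∀ m, (G m).Connected) (w : Word u) :
    w.1.length ≤ (freeProd G u).dist (emptyWord u) w := by
  obtain ⟨W, hW⟩ := (reachable_emptyWord hconn w).exists_walk_length_eq_dist
  have h := length_le_length_add_walk_length W
  rwa [hW, emptyWord, List.length_nil, zero_add] at h

end Words

section Swap

variable {i j : ι} (f : G i ≃g G j)

def swapLetter : Letter V → Letter V
  | ⟨m, x⟩ =>
    if h : m = i then ⟨j, f (h ▸ x)⟩
    else if h' : m = j then ⟨i, f.symm (h' ▸ x)⟩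
    else ⟨m, x⟩

lemma swapLetter_left (x : V i) : swapLetter f ⟨i, x⟩ = ⟨j, f x⟩ := by
  simp [swapLetter]

lemma swapLetter_right (hij : i ≠ j) (y : V j) : swapLetter f ⟨j, y⟩ = ⟨i, f.symm y⟩ := by
  simp [swapLetter, hij.symm]

lemma swapLetter_of_ne {m : ι} (hmi : m ≠ i) (hmj : m ≠ j) (x : V m) :
    swapLetter f ⟨m, x⟩ = ⟨m, x⟩ := by
  simp [swapLetter, hmi, hmj]

lemma swapLetter_fst (hij : i ≠ j) (c : Letter V) : (swapLetter f c).1 = Equiv.swap i j c.1 := by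
  obtain ⟨m, x⟩ := c
  by_cases hmi : m = i
  · subst hmi
    simp [swapLetter_left]
  by_cases hmj : m = j
  · subst hmj
    simp [swapLetter_right f hij]
  · simp [swapLetter_of_ne f hmi hmj, Equiv.swap_apply_of_ne_of_ne hmi hmj]

lemma swapLetter_involutive (hij : i ≠ j) : Function.Involutive (swapLetter (V := V) f) := by
  rintro ⟨m, x⟩
  by_cases hmi : m = i
  · subst hmi
    simp [swapLetter_left, swapLetter_right f hij]
  by_cases hmj : m = j
  · subst hmj
    simp [swapLetter_left, swapLetter_right f hij]
  · simp [swapLetter_of_ne f hmi hmj]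

/-- The effect of `swapLetter f` on the coordinates `upd u w` of a word. -/
def swapState (s : ∀ m, V m) : ∀ m, V m :=
  Function.update (Function.update s i (f.symm (s j))) j (f (s i))

lemma swapState_left (hij : i ≠ j) (s : ∀ m, V m) : swapState f s i = f.symm (s j) := by
  simp [swapState, hij]

lemma swapState_right (s : ∀ m, V m) : swapState f s j = f (s i) := by
  simp [swapState]

lemma swapState_of_ne {m : ι} (hmi : m ≠ i) (hmj : m ≠ j) (s : ∀ m, V m) :
    swapState f s m = s m := by
  simp [swapState, hmi, hmj]

lemma swapState_eq_self (hij : i ≠ j) {s : ∀ m, V m} (hs : s j = f (s i)) :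
    swapState f s = s := by
  ext n
  by_cases hni : n = i
  · subst hni
    simp [swapState_left f hij, hs]
  by_cases hnj : n = j
  · subst hnj
    simp [swapState_right, hs]
  · exact swapState_of_ne f hni hnj s

lemma upd_swapLetter_cons (hij : i ≠ j) {r r' : List (Letter V)}
    (h : upd u r' = swapState f (upd u r)) (c : Letter V) :
    upd u (swapLetter f c :: r') = swapState f (upd u (c :: r)) := by
  obtain ⟨m, x⟩ := c
  by_cases hmi : m = i
  · subst hmi
    rw [swapLetter_left, upd_cons, upd_cons, h]
    simp [swapState, Function.update_of_ne hij.symm, Function.update_idem]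
  by_cases hmj : m = j
  · subst hmj
    rw [swapLetter_right f hij, upd_cons, upd_cons, h]
    simp [swapState, Function.update_of_ne hij, Function.update_idem, Function.update_comm hij]
  · rw [swapLetter_of_ne f hmi hmj, upd_cons, upd_cons, h]
    simp [swapState, Function.update_of_ne (Ne.symm hmi), Function.update_of_ne (Ne.symm hmj),
      Function.update_comm hmi, Function.update_comm hmj]

/-- Both the admissibility condition `c.2 ≠ upd u w c.1` and the edges from `w` to `c :: w`
have this form. -/
def StateRel (R : ∀ m, V m → V m → Prop) (s : ∀ m, V m) (c : Letter V) : Prop :=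
  R c.1 (s c.1) c.2

lemma StateRel.swapLetter (hij : i ≠ j) {R : ∀ m, V m → V m → Prop}
    (hR : ∀ x y, R j (f x) (f y) ↔ R i x y) {s : ∀ m, V m} {c : Letter V}
    (h : StateRel R s c) : StateRel R (swapState f s) (swapLetter f c) := by
  obtain ⟨m, x⟩ := c
  by_cases hmi : m = i
  · subst hmi
    rw [swapLetter_left]
    show R j (swapState f s j) (f x)
    rw [swapState_right]
    exact (hR _ _).mpr h
  by_cases hmj : m = j
  · subst hmj
    rw [swapLetter_right f hij]
    show R i (swapState f s i) (f.symm x)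
    rw [swapState_left f hij, ← hR, RelIso.apply_symm_apply, RelIso.apply_symm_apply]
    exact h
  · rw [swapLetter_of_ne f hmi hmj]
    show R m (swapState f s m) x
    rw [swapState_of_ne f hmi hmj]
    exact h

end Swap

section IsBranch

omit [DecidableEq ι]

/-- The union of the branches of `freeProd G u` that leave `p` through the factors `i` and `j`. -/
def IsBranch (i j : ι) (p w : List (Letter V)) : Prop :=
  ∃ q a, w = q ++ a :: p ∧ (a.1 = i ∨ a.1 = j)

variable {i j : ι} {p : List (Letter V)}

lemma IsBranch.length_lt {w : List (Letter V)} (h : IsBranch i j p w) : p.length < w.length := by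
  obtain ⟨q, a, rfl, -⟩ := h
  simp only [List.length_append, List.length_cons]
  omega

lemma not_isBranch_self : ¬ IsBranch i j p p := fun h => h.length_lt.false

lemma isBranch_cons {c : Letter V} {r : List (Letter V)} :
    IsBranch i j p (c :: r) ↔ IsBranch i j p r ∨ (r = p ∧ (c.1 = i ∨ c.1 = j)) := by
  constructor
  · rintro ⟨_ | ⟨d, q⟩, a, h, ha⟩
    · obtain ⟨rfl, rfl⟩ := List.cons.inj h
      exact Or.inr ⟨rfl, ha⟩
    · exact Or.inl ⟨q, a, (List.cons.inj h).2, ha⟩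
  · rintro (⟨q, a, rfl, ha⟩ | ⟨rfl, hc⟩)
    exacts [⟨c :: q, a, rfl, ha⟩, ⟨[], c, rfl, hc⟩]

end IsBranch

section Branch

variable {i j : ι} {p : List (Letter V)}

open scoped Classical in
noncomputable def branchSwap (f : G i ≃g G j) (p : List (Letter V)) :
    List (Letter V) → List (Letter V)
  | [] => []
  | c :: r => (if IsBranch i j p (c :: r) then swapLetter f c else c) :: branchSwap f p r

variable (f : G i ≃g G j)

lemma branchSwap_of_not_isBranch {w : List (Letter V)} (h : ¬ IsBranch i j p w) :
    branchSwap f p w = w := by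
  induction w with
  | nil => rfl
  | cons c r ih =>
    rw [branchSwap, if_neg h, ih fun hr => h (isBranch_cons.mpr (Or.inl hr))]

lemma branchSwap_append_cons {a : Letter V} (ha : a.1 = i ∨ a.1 = j) (q : List (Letter V)) :
    branchSwap f p (q ++ a :: p) = (q ++ [a]).map (swapLetter f) ++ p := by
  induction q with
  | nil =>
    rw [List.nil_append, branchSwap, if_pos ⟨[], a, rfl, ha⟩,
      branchSwap_of_not_isBranch f not_isBranch_self]
    rfl
  | cons c q ih =>
    rw [List.cons_append, branchSwap, if_pos ⟨c :: q, a, rfl, ha⟩, ih]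
    rfl

lemma branchSwap_eq_self_of_length_le {w : List (Letter V)} (h : w.length ≤ p.length) :
    branchSwap f p w = w :=
  branchSwap_of_not_isBranch f fun hw => (hw.length_lt.trans_le h).false

lemma branchSwap_cons_self (x : V i) : branchSwap f p (⟨i, x⟩ :: p) = ⟨j, f x⟩ :: p := by
  simpa [swapLetter_left] using branchSwap_append_cons f (p := p) (a := ⟨i, x⟩) (Or.inl rfl) []

lemma branchSwap_involutive (hij : i ≠ j) : Function.Involutive (branchSwap f p) := by
  intro w
  by_cases h : IsBranch i j p w
  · obtain ⟨q, a, rfl, ha⟩ := h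
    have ha' : (swapLetter f a).1 = i ∨ (swapLetter f a).1 = j := by
      rw [swapLetter_fst f hij]
      rcases ha with ha | ha <;> simp [ha]
    rw [branchSwap_append_cons f ha, List.map_append, List.map_singleton, List.append_assoc,
      List.singleton_append, branchSwap_append_cons f ha', List.map_append, List.map_map,
      (swapLetter_involutive f hij).comp_self, List.map_id, List.map_singleton,
      swapLetter_involutive f hij, List.append_assoc, List.singleton_append]
  · rw [branchSwap_of_not_isBranch f h, branchSwap_of_not_isBranch f h]

lemma upd_map_swapLetter_append (hij : i ≠ j) (hbase : upd u p j = f (upd u p i))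
    (q : List (Letter V)) :
    upd u (q.map (swapLetter f) ++ p) = swapState f (upd u (q ++ p)) := by
  induction q with
  | nil => exact (swapState_eq_self f hij hbase).symm
  | cons c q ih => exact upd_swapLetter_cons f hij ih c

lemma upd_branchSwap (hij : i ≠ j) (hbase : upd u p j = f (upd u p i)) {r : List (Letter V)}
    (hr : IsBranch i j p r ∨ r = p) :
    upd u (branchSwap f p r) = swapState f (upd u r) := by
  rcases hr with ⟨q, a, rfl, ha⟩ | rfl
  · rw [branchSwap_append_cons f ha, upd_map_swapLetter_append f hij hbase, List.append_assoc,
      List.singleton_append]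
  · rw [branchSwap_of_not_isBranch f not_isBranch_self]
    exact (swapState_eq_self f hij hbase).symm

lemma head?_map_swapLetter_append (hhead : ∀ b ∈ p.head?, b.1 ≠ i ∧ b.1 ≠ j)
    (q : List (Letter V)) :
    (q.map (swapLetter f) ++ p).head? = (q ++ p).head?.map (swapLetter f) := by
  rcases q with _ | ⟨c, q⟩
  · rcases p with _ | ⟨⟨m, x⟩, p⟩
    · rfl
    · obtain ⟨hmi, hmj⟩ := hhead _ rfl
      simp [swapLetter_of_ne f hmi hmj]
  · simp

lemma adm_map_swapLetter_append (hij : i ≠ j) (hhead : ∀ b ∈ p.head?, b.1 ≠ i ∧ b.1 ≠ j)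
    (hbase : upd u p j = f (upd u p i)) {q : List (Letter V)} (h : Adm u (q ++ p)) :
    Adm u (q.map (swapLetter f) ++ p) := by
  induction q with
  | nil => exact h
  | cons c q ih =>
    rw [List.cons_append, adm_cons_iff] at h
    obtain ⟨hq, hc, hx⟩ := h
    rw [List.map_cons, List.cons_append, adm_cons_iff]
    refine ⟨ih hq, fun b hb => ?_, ?_⟩
    · rw [head?_map_swapLetter_append f hhead] at hb
      obtain ⟨b₀, hb₀, rfl⟩ := Option.mem_map.mp hb
      rw [swapLetter_fst f hij, swapLetter_fst f hij]
      exact (Equiv.injective _).ne (hc b₀ hb₀)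
    · rw [upd_map_swapLetter_append f hij hbase]
      exact StateRel.swapLetter f hij (R := fun _ x y => y ≠ x)
        (fun _ _ => f.injective.ne_iff) hx

lemma adm_branchSwap (hij : i ≠ j) (hhead : ∀ b ∈ p.head?, b.1 ≠ i ∧ b.1 ≠ j)
    (hbase : upd u p j = f (upd u p i)) {w : List (Letter V)} (hw : Adm u w) :
    Adm u (branchSwap f p w) := by
  by_cases h : IsBranch i j p w
  · obtain ⟨q, a, rfl, ha⟩ := h
    rw [branchSwap_append_cons f ha]
    exact adm_map_swapLetter_append f hij hhead hbase (by simpa using hw)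
  · rwa [branchSwap_of_not_isBranch f h]

lemma pre_swapLetter_cons (hij : i ≠ j) {m : ι} {a b : V m} (hab : (G m).Adj a b)
    (r : List (Letter V)) : Pre G u (swapLetter f ⟨m, a⟩ :: r) (swapLetter f ⟨m, b⟩ :: r) := by
  by_cases hmi : m = i
  · subst hmi
    rw [swapLetter_left, swapLetter_left]
    exact Or.inl ⟨r, j, f a, f b, f.map_adj_iff.mpr hab, rfl, rfl⟩
  by_cases hmj : m = j
  · subst hmj
    rw [swapLetter_right f hij, swapLetter_right f hij]
    exact Or.inl ⟨r, i, f.symm a, f.symm b, f.symm.map_adj_iff.mpr hab, rfl, rfl⟩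
  · rw [swapLetter_of_ne f hmi hmj, swapLetter_of_ne f hmi hmj]
    exact Or.inl ⟨r, m, a, b, hab, rfl, rfl⟩

lemma pre_branchSwap (hij : i ≠ j) (hbase : upd u p j = f (upd u p i))
    {v w : List (Letter V)} (h : Pre G u v w) :
    Pre G u (branchSwap f p v) (branchSwap f p w) := by
  rcases h with ⟨r, m, a, b, hab, rfl, rfl⟩ | ⟨m, a, hadj, rfl⟩
  · have hiff : IsBranch i j p (⟨m, a⟩ :: r) ↔ IsBranch i j p (⟨m, b⟩ :: r) := by
      simp only [isBranch_cons]
    rw [branchSwap, branchSwap]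
    by_cases h : IsBranch i j p (⟨m, a⟩ :: r)
    · rw [if_pos h, if_pos (hiff.mp h)]
      exact pre_swapLetter_cons f hij hab _
    · rw [if_neg h, if_neg (hiff.not.mp h)]
      exact Or.inl ⟨_, m, a, b, hab, rfl, rfl⟩
  · rw [branchSwap]
    by_cases h : IsBranch i j p (⟨m, a⟩ :: v)
    · rw [if_pos h]
      refine Or.inr ⟨_, _, ?_, rfl⟩
      rw [upd_branchSwap f hij hbase ((isBranch_cons.mp h).imp_right And.left)]
      exact StateRel.swapLetter f hij (R := fun m => (G m).Adj) (s := upd u v) (c := ⟨m, a⟩)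
        (fun _ _ => f.map_adj_iff) hadj
    · rw [if_neg h, branchSwap_of_not_isBranch f fun hv => h (isBranch_cons.mpr (Or.inl hv))]
      exact Or.inr ⟨m, a, hadj, rfl⟩

end Branch

def isoOfInvolutive {W : Type*} {H : SimpleGraph W} {σ : W → W} (hσ : Function.Involutive σ)
    (hadj : ∀ {v w}, H.Adj v w → H.Adj (σ v) (σ w)) : H ≃g H where
  toEquiv := hσ.toPerm σ
  map_rel_iff' {v w} :=
    ⟨fun h => by simpa only [Function.Involutive.coe_toPerm, hσ v, hσ w] using hadj h, hadj⟩

noncomputable def branchSwapIso {i j : ι} (f : G i ≃g G j) {p : List (Letter V)} (hij : i ≠ j) (hhead : ∀ b ∈ p.head?, b.1 ≠ i ∧ b.1 ≠ j)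
    (hbase : upd u p j = f (upd u p i)) : freeProd G u ≃g freeProd G u :=
  isoOfInvolutive (σ := fun w : Word u => ⟨branchSwap f p w.1, adm_branchSwap f hij hhead hbase w.2⟩)
    (fun w => Subtype.ext (branchSwap_involutive f hij w.1))
    (fun h => by
      obtain ⟨hne, hpre⟩ := (SimpleGraph.fromRel_adj _ _ _).mp h
      refine (SimpleGraph.fromRel_adj _ _ _).mpr ⟨fun he => hne ?_,
        hpre.imp (pre_branchSwap f hij hbase) (pre_branchSwap f hij hbase)⟩
      exact Subtype.ext ((branchSwap_involutive f hij).injective (congrArg Subtype.val he)))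

lemma exists_base_word {i j l : ι} [Nontrivial (V i)] [Nontrivial (V l)] (hij : i ≠ j)
    (hli : l ≠ i) (hlj : l ≠ j) (f : G i ≃g G j) (k : ℕ) :
    ∃ p : List (Letter V), Adm u p ∧ k ≤ p.length ∧ (∀ b ∈ p.head?, b.1 ≠ i ∧ b.1 ≠ j) ∧
      upd u p j = f (upd u p i) := by
  obtain ⟨p₀, hp₀, hlen₀, hhead₀⟩ := exists_adm_length_ge (u := u) hli.symm k
  obtain ⟨p₁, hp₁, hlen₁, hhead₁, hbase₁⟩ : ∃ p₁ : List (Letter V), Adm u p₁ ∧ k ≤ p₁.length ∧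
      (∀ b ∈ p₁.head?, l ≠ b.1) ∧ upd u p₁ j = f (upd u p₁ i) := by
    by_cases h : f (upd u p₀ i) = upd u p₀ j
    · exact ⟨p₀, hp₀, hlen₀, fun b hb => hhead₀ b hb ▸ hli, h.symm⟩
    · refine ⟨⟨j, f (upd u p₀ i)⟩ :: p₀,
        adm_cons_iff.mpr ⟨hp₀, fun b hb => hhead₀ b hb ▸ hij.symm, h⟩,
        by simp only [List.length_cons]; omega, by simpa using hlj, ?_⟩
      simp [upd_cons, Function.update_of_ne hij]
  obtain ⟨z, hz⟩ := exists_adm_cons (m := l) hp₁ hhead₁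
  refine ⟨⟨l, z⟩ :: p₁, hz, by simp only [List.length_cons]; omega, by simpa using ⟨hli, hlj⟩, ?_⟩
  simpa [upd_cons, Function.update_of_ne hli.symm, Function.update_of_ne hlj.symm] using hbase₁

end FreeProdGraph

open FreeProdGraph

/-- If two factors of a free product of at least three connected graphs
(each with at least two vertices) are isomorphic, then the automorphism
group of the free product is non-discrete: for every `k` there is a
nontrivial automorphism fixing the ball of radius `k` around `∅`
pointwise. -/
theorem stmt18 {n : ℕ} (hn : 3 ≤ n) {V : Fin n → Type} (G : ∀ i, SimpleGraph (V i))
    (u : ∀ i, V i) (hconn : ∀ i, (G i).Connected) (hnt : ∀ i, Nontrivial (V i))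
    (i j : Fin n) (hij : i ≠ j) (hiso : Nonempty (G i ≃g G j)) :
    ∀ k : ℕ, ∃ φ : freeProd G u ≃g freeProd G u,
      (∀ v : Word u, (freeProd G u).dist (emptyWord u) v ≤ k → φ v = v) ∧
      ∃ w : Word u, φ w ≠ w := by
  intro k
  obtain ⟨f⟩ := hiso
  obtain ⟨l, -, hl⟩ := Finset.exists_mem_notMem_of_card_lt_card (s := {i, j}) (t := .univ)
    (by rw [Finset.card_univ, Fintype.card_fin]; exact Finset.card_le_two.trans_lt (by omega))
  rw [Finset.mem_insert, Finset.mem_singleton, not_or] at hl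
  obtain ⟨p, hp, hlen, hhead, hbase⟩ := exists_base_word (u := u) hij hl.1 hl.2 f k
  refine ⟨branchSwapIso f hij hhead hbase, fun v hv => Subtype.ext ?_, ?_⟩
  · exact branchSwap_eq_self_of_length_le f ((length_le_dist hconn v).trans (hv.trans hlen))
  · obtain ⟨x, hx⟩ := exists_adm_cons (m := i) hp fun b hb => (hhead b hb).1.symm
    refine ⟨⟨_, hx⟩, fun h => hij ?_⟩
    have h : branchSwap f p (⟨i, x⟩ :: p) = ⟨i, x⟩ :: p := congrArg Subtype.val h
    rw [branchSwap_cons_self] at h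
    exact (congrArg Sigma.fst (List.cons.inj h).1).symm
end
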